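/- arXiv:2511.08160 — 2 statements merged into one kernel-verified Lean document; each statement's English description precedes it below -/
import Mathlib

section
/- Let (N, M, (v_i)_{i∈N}, (s_i)_{i∈N}) be a fair-division-with-social-impact instance with N nonempty, and define binary social impacts s*_i : M → {0,1} by s*_i(g) = 1 if s_i(g) = max_{j∈N} s_j(g) and s*_i(g) = 0 otherwise. Then an allocation A is SIM with respect to (s_i) and EF1 if and only if A is SIM with respect to (s*_i) and EF1; in particular, the instance (N, M, (v_i), (s_i)) admits a SIM and EF1 allocation if and only if the instance (N, M, (v_i), (s*_i)) does. -/
/-!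
Since impacts are additive, an allocation is SIM exactly when every item goes to an agent of
maximal impact on it: otherwise moving a single item to such an agent raises the total. This
condition depends only on which agents maximize the impact of each item, and that is precisely
what the binary impacts record; EF1 does not involve the impacts at all.
-/

open Finset

variable {N M : Type*}

/-- The bundle of agent `i` under allocation `A` (items mapped to `i`). -/
def bundle [Fintype M] [DecidableEq N] (A : M → N) (i : N) : Finset M :=
  Finset.univ.filter fun g => A g = i

/-- The (additive) value of a bundle `S` under the item-values `f`. -/
def val (f : M → ℕ) (S : Finset M) : ℕ := ∑ g ∈ S, f g

/-- An allocation is social impact maximizing (SIM). -/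
def SIM [Fintype N] [Fintype M] [DecidableEq N] (s : N → M → ℕ) (A : M → N) : Prop :=
  ∀ A' : M → N, ∑ i : N, val (s i) (bundle A i) ≥ ∑ i : N, val (s i) (bundle A' i)

/-- An allocation is envy-free up to one item (EF1). -/
def EF1 [Fintype M] [DecidableEq N] [DecidableEq M] (v : N → M → ℕ) (A : M → N) : Prop :=
  ∀ i j : N, ∃ g : M, val (v i) (bundle A i) ≥ val (v i) ((bundle A j).erase g)

lemma sum_val_bundle [Fintype N] [Fintype M] [DecidableEq N] (f : N → M → ℕ) (A : M → N) :
    ∑ i : N, val (f i) (bundle A i) = ∑ g : M, f (A g) g := by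
  rw [← sum_fiberwise univ A (fun g => f (A g) g)]
  refine sum_congr rfl fun i _ => sum_congr rfl fun g hg => ?_
  rw [(mem_filter.mp hg).2]

lemma SIM_iff_forall_le [Fintype N] [Fintype M] [DecidableEq N] (s : N → M → ℕ) (A : M → N) :
    SIM s A ↔ ∀ g j, s j g ≤ s (A g) g := by
  classical
  simp only [SIM, sum_val_bundle, ge_iff_le]
  refine ⟨fun hA g₀ j => ?_, fun h A' => sum_le_sum fun g _ => h g (A' g)⟩
  by_contra! hlt
  have hbetter : ∑ g, s (A g) g < ∑ g, s (Function.update A g₀ j g) g := by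
    refine sum_lt_sum (fun g _ => ?_) ⟨g₀, mem_univ _, by simpa using hlt⟩
    rcases eq_or_ne g g₀ with rfl | hg
    · simpa using hlt.le
    · simp [hg]
  exact hbetter.not_ge (hA _)

lemma eq_univ_sup_iff_forall_le [Fintype N] (f : N → ℕ) (i : N) :
    f i = univ.sup f ↔ ∀ j, f j ≤ f i :=
  ⟨fun h j => h ▸ le_sup (mem_univ j),
    fun h => le_antisymm (le_sup (mem_univ i)) (Finset.sup_le fun j _ => h j)⟩

def maxIndicator [Fintype N] (f : N → ℕ) (i : N) : ℕ :=
  if f i = univ.sup f then 1 else 0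

lemma forall_maxIndicator_le_iff [Fintype N] (f : N → ℕ) (i : N) :
    (∀ j, maxIndicator f j ≤ maxIndicator f i) ↔ ∀ j, f j ≤ f i := by
  rw [← eq_univ_sup_iff_forall_le f]
  constructor
  · intro h
    obtain ⟨k, -, hk⟩ := exists_mem_eq_sup univ ⟨i, mem_univ i⟩ f
    by_contra hi
    rw [hk] at hi
    simpa [maxIndicator, hk, hi] using h k
  · intro hi j
    unfold maxIndicator
    split_ifs <;> simp_all

theorem sim_ef1_binary_social_impact_general
    [Fintype N] [Fintype M] [DecidableEq N] [DecidableEq M]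
    (v s : N → M → ℕ) (sstar : N → M → ℕ)
    (hstar : ∀ i g, sstar i g =
      if s i g = Finset.univ.sup (fun j : N => s j g) then 1 else 0) :
    (∀ A : M → N, (SIM s A ∧ EF1 v A) ↔ (SIM sstar A ∧ EF1 v A)) ∧
    ((∃ A : M → N, SIM s A ∧ EF1 v A) ↔ (∃ A : M → N, SIM sstar A ∧ EF1 v A)) := by
  have hsim : ∀ A, SIM s A ↔ SIM sstar A := fun A => by
    simp only [SIM_iff_forall_le]
    exact forall_congr' fun g => (forall_maxIndicator_le_iff (fun j => s j g) (A g)).symm.trans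
      (by simp only [maxIndicator, hstar])
  exact ⟨fun A => and_congr_left' (hsim A), exists_congr fun A => and_congr_left' (hsim A)⟩

/-- Replacing the social impacts by the binary impacts `s*` (indicator of being a
social-impact maximizer of the item) preserves being SIM-and-EF1, and in particular
preserves the existence of a SIM and EF1 allocation. -/
theorem sim_ef1_binary_social_impact
    [Fintype N] [Fintype M] [DecidableEq N] [DecidableEq M] [Nonempty N]
    (v s : N → M → ℕ) (sstar : N → M → ℕ)
    (hstar : ∀ i g, sstar i g =
      if s i g = Finset.univ.sup (fun j : N => s j g) then 1 else 0) :
    (∀ A : M → N, (SIM s A ∧ EF1 v A) ↔ (SIM sstar A ∧ EF1 v A)) ∧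
    ((∃ A : M → N, SIM s A ∧ EF1 v A) ↔ (∃ A : M → N, SIM sstar A ∧ EF1 v A)) :=
  sim_ef1_binary_social_impact_general v s sstar hstar
end

section
/- For every real α with 0 ≤ α < 1, the fair-division-with-social-impact instance with two agents a_1, a_2 and two items g_1, g_2, where v_{a_1}(g_k) = v_{a_2}(g_k) = 1, s_{a_1}(g_k) = 1, and s_{a_2}(g_k) = α for k ∈ {1,2}, admits no allocation that is simultaneously SIM and α-SA-EF1. In particular, for every α ∈ [0,1), a SIM and α-SA-EF1 allocation is not guaranteed to exist. -/
/-!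
Giving an item to agent `a₁` yields social impact `1`, giving it to `a₂` only `α < 1`, so the
unique SIM allocation hands both items to `a₁`. Then `a₂`, holding nothing, envies `a₁` even
after the removal of any one item, and the social-aware exemption does not apply because
`s_{a₂} = α · s_{a₁}` itemwise, so `s_{a₂}(A_{a₁}) = α · s_{a₁}(A_{a₁})` is not strictly smaller.
-/

open Finset

variable {N M : Type*}

/-- The (additive) real value of a bundle `S` under the item-values `f`. -/
def valR (f : M → ℝ) (S : Finset M) : ℝ := ∑ g ∈ S, f g

/-- An allocation is social impact maximizing (SIM), for real-valued impacts. -/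
def SIMR [Fintype N] [Fintype M] [DecidableEq N] (s : N → M → ℝ) (A : M → N) : Prop :=
  ∀ A' : M → N, ∑ i : N, valR (s i) (bundle A i) ≥ ∑ i : N, valR (s i) (bundle A' i)

/-- `α`-SA-EF1: for every pair of agents `i, j`, either there is an item `g` with
`v_i(A_i) ≥ v_i(A_j \ {g})`, or `s_i(A_j) < α · s_j(A_j)`. -/
def alphaSAEF1 [Fintype M] [DecidableEq N] [DecidableEq M]
    (α : ℝ) (v : N → M → ℕ) (s : N → M → ℝ) (A : M → N) : Prop :=
  ∀ i j : N,
    (∃ g : M, val (v i) (bundle A i) ≥ val (v i) ((bundle A j).erase g)) ∨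
    valR (s i) (bundle A j) < α * valR (s j) (bundle A j)

theorem sum_valR_bundle [Fintype N] [Fintype M] [DecidableEq N] (s : N → M → ℝ) (A : M → N) :
    ∑ i, valR (s i) (bundle A i) = ∑ g, s (A g) g := by
  rw [← sum_fiberwise univ A fun g => s (A g) g]
  refine sum_congr rfl fun i _ => sum_congr rfl fun g hg => ?_
  rw [(mem_filter.1 hg).2]

theorem SIMR.apply_eq_of_forall_lt [Fintype N] [Fintype M] [DecidableEq N]
    {s : N → M → ℝ} {A : M → N} (hA : SIMR s A) {i : N} (hi : ∀ g, ∀ j ≠ i, s j g < s i g)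
    (g : M) : A g = i := by
  by_contra hg
  have hlt : ∑ g, s (A g) g < ∑ g, s i g :=
    sum_lt_sum (fun g' _ => by
      rcases eq_or_ne (A g') i with h | h
      · rw [h]
      · exact (hi g' _ h).le) ⟨g, mem_univ g, hi g _ hg⟩
  have hle := hA fun _ => i
  rw [sum_valR_bundle, sum_valR_bundle] at hle
  exact hle.not_gt hlt

theorem bundle_const_self [Fintype M] [DecidableEq N] (i : N) :
    bundle (fun _ : M => i) i = univ := by
  simp [bundle]

theorem bundle_const_of_ne [Fintype M] [DecidableEq N] {i j : N} (hji : j ≠ i) :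
    bundle (fun _ : M => i) j = ∅ := by
  simp [bundle, hji.symm]

theorem not_alphaSAEF1_const [Fintype M] [DecidableEq N] [DecidableEq M]
    {α : ℝ} {v : N → M → ℕ} {s : N → M → ℝ} {i j : N} (hji : j ≠ i)
    (hv : ∀ g, 0 < val (v j) (univ.erase g)) (hs : α * valR (s i) univ ≤ valR (s j) univ) :
    ¬ alphaSAEF1 α v s fun _ => i := by
  intro h
  rcases h j i with ⟨g, hg⟩ | hlt
  · rw [bundle_const_self, bundle_const_of_ne hji] at hg
    exact (hv g).not_ge (by simpa [_root_.val] using hg)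
  · rw [bundle_const_self] at hlt
    exact hs.not_gt hlt

theorem no_sim_alpha_saef1_general (α : ℝ) (h1 : α < 1) :
    ¬ ∃ A : Fin 2 → Fin 2,
        SIMR (fun i : Fin 2 => fun _ : Fin 2 => if i = 0 then (1 : ℝ) else α) A ∧
        alphaSAEF1 α (fun _ : Fin 2 => fun _ : Fin 2 => (1 : ℕ))
          (fun i : Fin 2 => fun _ : Fin 2 => if i = 0 then (1 : ℝ) else α) A := by
  rintro ⟨A, hSIM, hEF⟩
  obtain rfl : A = fun _ => 0 :=
    funext <| hSIM.apply_eq_of_forall_lt fun _ j hj => by simpa [hj] using h1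
  refine not_alphaSAEF1_const (j := 1) (by decide) (fun g => ?_) ?_ hEF
  · simp [_root_.val, card_erase_of_mem]
  · simp [valR, mul_comm]

/-- For every `0 ≤ α < 1`, the two-agent, two-item instance with `v(g) = 1` for
both agents and `s_{a₁}(g) = 1`, `s_{a₂}(g) = α` admits no SIM and `α`-SA-EF1
allocation; in particular a SIM and `α`-SA-EF1 allocation need not exist. -/
theorem no_sim_alpha_saef1 (α : ℝ) (h0 : 0 ≤ α) (h1 : α < 1) :
    ¬ ∃ A : Fin 2 → Fin 2,
        SIMR (fun i : Fin 2 => fun _ : Fin 2 => if i = 0 then (1 : ℝ) else α) A ∧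
        alphaSAEF1 α (fun _ : Fin 2 => fun _ : Fin 2 => (1 : ℕ))
          (fun i : Fin 2 => fun _ : Fin 2 => if i = 0 then (1 : ℝ) else α) A :=
  no_sim_alpha_saef1_general α h1
end
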